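/- arXiv:1905.02764 — 2 statements merged into one kernel-verified Lean document; each statement's English description precedes it below -/
import Mathlib

section
/- Let Ω₁, Ω₂ ⊂ ℝⁿ be bounded connected open sets, and let Γ be a nonempty connected open subset of ∂Ω₁ ∩ ∂Ω₂. Let G be the connected component of Ω₁ ∩ Ω₂ whose boundary contains Γ. If Ω₁ ≠ Ω₂, then (possibly after interchanging Ω₁ and Ω₂) the set ∂G ∩ Ω₁ ∩ (∂Ω₂ \ Γ) is nonempty. -/
/-!
Say some `y ∈ Ω₁` lies outside `Ω₂`. The preconnected set `Ω₁` meets the open set `G` but is not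
contained in it, so some `z ∈ Ω₁` lies in `closure G \ G`. A connected component of `Ω₁ ∩ Ω₂` is
relatively closed in `Ω₁ ∩ Ω₂`, hence `z ∉ Ω₂`, so `z ∈ ∂Ω₂`; and `z ∉ Γ` because `Γ ⊆ ∂Ω₁` misses
the open set `Ω₁`.
-/

open Set

section

variable {X : Type*} [TopologicalSpace X]

theorem closure_connectedComponentIn_inter_subset (F : Set X) (x : X) :
    closure (connectedComponentIn F x) ∩ F ⊆ connectedComponentIn F x := by
  by_cases hx : x ∈ F
  · set C := connectedComponentIn F x
    have hC : IsPreconnected (closure C ∩ F) :=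
      isPreconnected_connectedComponentIn.subset_closure
        (subset_inter subset_closure (connectedComponentIn_subset F x)) inter_subset_left
    exact hC.subset_connectedComponentIn ⟨subset_closure (mem_connectedComponentIn hx), hx⟩
      inter_subset_right
  · simp [connectedComponentIn_eq_empty hx]

theorem exists_mem_frontier_connectedComponentIn_inter_frontier_diff [LocallyConnectedSpace X]
    {U V Γ : Set X} {x y : X} (hUV : IsOpen (U ∩ V)) (hU : IsPreconnected U)
    (hΓU : Disjoint Γ U) (hx : x ∈ U ∩ V) (hy : y ∈ U \ V) :
    (frontier (connectedComponentIn (U ∩ V) x) ∩ U ∩ (frontier V \ Γ)).Nonempty := by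
  set G := connectedComponentIn (U ∩ V) x
  have hGUV : G ⊆ U ∩ V := connectedComponentIn_subset _ _
  have hU_not_subset : ¬U ⊆ G := fun h => hy.2 (hGUV (h hy.1)).2
  obtain ⟨z, ⟨hzG, hzU⟩, hz_notG⟩ : ∃ z ∈ closure G ∩ U, z ∉ G := not_subset.1 fun h =>
    hU_not_subset <| hU.subset_of_closure_inter_subset hUV.connectedComponentIn
      ⟨x, hx.1, mem_connectedComponentIn hx⟩ h
  have hzV : z ∉ V := fun hzV =>
    hz_notG (closure_connectedComponentIn_inter_subset _ _ ⟨hzG, hzU, hzV⟩)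
  refine ⟨z, ⟨⟨hzG, fun hz => hz_notG (interior_subset hz)⟩, hzU⟩,
    ⟨closure_mono (fun w hw => (hGUV hw).2) hzG, fun hz => hzV (interior_subset hz)⟩,
    fun hzΓ => hΓU.ne_of_mem hzΓ hzU rfl⟩

end

theorem boundary_intersection_lemma_general {n : ℕ}
    (Ω₁ Ω₂ Γ G : Set (EuclideanSpace ℝ (Fin n)))
    (hΩ₁open : IsOpen Ω₁) (hΩ₂open : IsOpen Ω₂)
    (hΩ₁conn : IsConnected Ω₁) (hΩ₂conn : IsConnected Ω₂)
    (hΓsub : Γ ⊆ frontier Ω₁ ∩ frontier Ω₂)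
    (hGcomp : ∃ x ∈ Ω₁ ∩ Ω₂, G = connectedComponentIn (Ω₁ ∩ Ω₂) x)
    (hne : Ω₁ ≠ Ω₂) :
    (frontier G ∩ Ω₁ ∩ (frontier Ω₂ \ Γ)).Nonempty ∨
      (frontier G ∩ Ω₂ ∩ (frontier Ω₁ \ Γ)).Nonempty := by
  obtain ⟨x, hx, rfl⟩ := hGcomp
  have hΓΩ₁ : Disjoint Γ Ω₁ :=
    (disjoint_frontier_iff_isOpen.2 hΩ₁open).mono_left fun p hp => (hΓsub hp).1
  have hΓΩ₂ : Disjoint Γ Ω₂ :=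
    (disjoint_frontier_iff_isOpen.2 hΩ₂open).mono_left fun p hp => (hΓsub hp).2
  by_cases h : Ω₁ ⊆ Ω₂
  · obtain ⟨y, hy₂, hy₁⟩ := not_subset.1 fun h' => hne (h.antisymm h')
    rw [inter_comm Ω₁ Ω₂] at hx ⊢
    exact .inr <| exists_mem_frontier_connectedComponentIn_inter_frontier_diff
      (hΩ₂open.inter hΩ₁open) hΩ₂conn.isPreconnected hΓΩ₂ hx ⟨hy₂, hy₁⟩
  · obtain ⟨y, hy₁, hy₂⟩ := not_subset.1 h
    exact .inl <| exists_mem_frontier_connectedComponentIn_inter_frontier_diff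
      (hΩ₁open.inter hΩ₂open) hΩ₁conn.isPreconnected hΓΩ₁ hx ⟨hy₁, hy₂⟩

/-- Lemma A.1: `Ω₁, Ω₂ ⊂ ℝⁿ` bounded connected open sets, `Γ` a nonempty connected
open subset of `∂Ω₁ ∩ ∂Ω₂`, and `G` the connected component of `Ω₁ ∩ Ω₂` whose
boundary contains `Γ`.  If `Ω₁ ≠ Ω₂`, then after possibly interchanging `Ω₁` and
`Ω₂`, the set `∂G ∩ Ω₁ ∩ (∂Ω₂ \ Γ)` is nonempty.  (The smoothness of the boundaries
is replaced by the topological assumptions `Γ ⊆ ∂G` and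
`closure(Ωⱼ \ G) ∩ Γ = ∅`.) -/
theorem boundary_intersection_lemma {n : ℕ}
    (Ω₁ Ω₂ Γ G : Set (EuclideanSpace ℝ (Fin n)))
    (hΩ₁open : IsOpen Ω₁) (hΩ₂open : IsOpen Ω₂)
    (hΩ₁conn : IsConnected Ω₁) (hΩ₂conn : IsConnected Ω₂)
    (hΩ₁bdd : Bornology.IsBounded Ω₁) (hΩ₂bdd : Bornology.IsBounded Ω₂)
    (hΓne : Γ.Nonempty) (hΓconn : IsPreconnected Γ)
    (hΓsub : Γ ⊆ frontier Ω₁ ∩ frontier Ω₂)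
    (hΓopen : ∃ U : Set (EuclideanSpace ℝ (Fin n)),
      IsOpen U ∧ Γ = U ∩ (frontier Ω₁ ∩ frontier Ω₂))
    (hGcomp : ∃ x ∈ Ω₁ ∩ Ω₂, G = connectedComponentIn (Ω₁ ∩ Ω₂) x)
    (hΓG : Γ ⊆ frontier G)
    (hcl₁ : closure (Ω₁ \ G) ∩ Γ = ∅) (hcl₂ : closure (Ω₂ \ G) ∩ Γ = ∅)
    (hne : Ω₁ ≠ Ω₂) :
    (frontier G ∩ Ω₁ ∩ (frontier Ω₂ \ Γ)).Nonempty ∨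
      (frontier G ∩ Ω₂ ∩ (frontier Ω₁ \ Γ)).Nonempty :=
  boundary_intersection_lemma_general Ω₁ Ω₂ Γ G hΩ₁open hΩ₂open hΩ₁conn hΩ₂conn hΓsub hGcomp hne
end

section
/- Let Ω₁, Ω₂ ⊂ ℝⁿ be open sets with Ω₁ \ Ω₂ ≠ ∅, Γ ⊆ ∂Ω₁ ∩ ∂Ω₂, and let G be a connected component of Ω₁ ∩ Ω₂ with Γ ⊆ ∂G and closure(Ω₁ \ G) ∩ Γ = ∅. Then ∂(Ω₁ \ G) ⊆ (∂G ∩ (∂Ω₂ \ Γ)) ∪ (∂Ω₁ \ Γ). -/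
open Set

section

variable {X : Type*} [TopologicalSpace X]

theorem frontier_diff_subset_of_isOpen {U V : Set X} (hU : IsOpen U) :
    frontier (U \ V) ⊆ (frontier V ∩ U) ∪ frontier U := by
  intro x hx
  rcases frontier_inter_subset U Vᶜ hx with ⟨hxU, -⟩ | ⟨hxU, hxV⟩
  · exact Or.inr hxU
  · by_cases hx : x ∈ U
    · exact Or.inl ⟨frontier_compl V ▸ hxV, hx⟩
    · exact Or.inr (hU.frontier_eq ▸ ⟨hxU, hx⟩)

/-- A point of `U` close to the component `C` lies in an open component meeting `C`, hence in `C`. -/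
theorem IsOpen.disjoint_frontier_connectedComponentIn [LocallyConnectedSpace X] {U : Set X}
    (hU : IsOpen U) (x : X) : Disjoint (frontier (connectedComponentIn U x)) U := by
  refine disjoint_left.mpr fun y hy hyU => ?_
  obtain ⟨z, hzy, hzx⟩ := mem_closure_iff.mp (frontier_subset_closure hy) _
    hU.connectedComponentIn (mem_connectedComponentIn hyU)
  have hsame : connectedComponentIn U y = connectedComponentIn U x :=
    (connectedComponentIn_eq hzy).trans (connectedComponentIn_eq hzx).symm
  exact (hU.connectedComponentIn.inter_frontier_eq).subset
    ⟨hsame ▸ mem_connectedComponentIn hyU, hy⟩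

end

theorem frontier_diff_subset_general {n : ℕ}
    (Ω₁ Ω₂ Γ G : Set (EuclideanSpace ℝ (Fin n)))
    (hΩ₁open : IsOpen Ω₁) (hΩ₂open : IsOpen Ω₂)
    (hGcomp : ∃ x ∈ Ω₁ ∩ Ω₂, G = connectedComponentIn (Ω₁ ∩ Ω₂) x)
    (hcl : closure (Ω₁ \ G) ∩ Γ = ∅) :
    frontier (Ω₁ \ G) ⊆ (frontier G ∩ (frontier Ω₂ \ Γ)) ∪ (frontier Ω₁ \ Γ) := by
  obtain ⟨x₀, -, rfl⟩ := hGcomp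
  intro x hx
  have hxΓ : x ∉ Γ := fun hΓ => hcl.subset ⟨frontier_subset_closure hx, hΓ⟩
  rcases frontier_diff_subset_of_isOpen hΩ₁open hx with ⟨hxG, hxΩ₁⟩ | hxΩ₁
  · have hxΩ₂ : x ∉ Ω₂ := fun hxΩ₂ =>
      disjoint_left.mp ((hΩ₁open.inter hΩ₂open).disjoint_frontier_connectedComponentIn x₀)
        hxG ⟨hxΩ₁, hxΩ₂⟩
    have hxclΩ₂ : x ∈ closure Ω₂ := closure_mono
      ((connectedComponentIn_subset _ _).trans inter_subset_right) (frontier_subset_closure hxG)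
    exact Or.inl ⟨hxG, hΩ₂open.frontier_eq ▸ ⟨hxclΩ₂, hxΩ₂⟩, hxΓ⟩
  · exact Or.inr ⟨hxΩ₁, hxΓ⟩

/-- Inclusion (A.1) from the proof of Lemma A.1:
`∂(Ω₁ \ G) ⊆ (∂G ∩ (∂Ω₂ \ Γ)) ∪ (∂Ω₁ \ Γ)`. -/
theorem frontier_diff_subset {n : ℕ}
    (Ω₁ Ω₂ Γ G : Set (EuclideanSpace ℝ (Fin n)))
    (hΩ₁open : IsOpen Ω₁) (hΩ₂open : IsOpen Ω₂)
    (hdiff : (Ω₁ \ Ω₂).Nonempty)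
    (hΓsub : Γ ⊆ frontier Ω₁ ∩ frontier Ω₂)
    (hGcomp : ∃ x ∈ Ω₁ ∩ Ω₂, G = connectedComponentIn (Ω₁ ∩ Ω₂) x)
    (hΓG : Γ ⊆ frontier G)
    (hcl : closure (Ω₁ \ G) ∩ Γ = ∅) :
    frontier (Ω₁ \ G) ⊆ (frontier G ∩ (frontier Ω₂ \ Γ)) ∪ (frontier Ω₁ \ Γ) :=
  frontier_diff_subset_general Ω₁ Ω₂ Γ G hΩ₁open hΩ₂open hGcomp hcl
end
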